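/- arXiv:1312.5184 — 7 statements merged into one kernel-verified Lean document; each statement's English description precedes it below -/
import Mathlib

section
/- Let a > b > 0 and let α, β ∈ ℝ³ satisfy |α|² = a², |β|² = b², α·β = 0. Then a² − (α₁β₂ − α₂β₁) > 0 and a²·[(α₁−β₂)² + (α₂+β₁)²] ≤ (a² − (α₁β₂ − α₂β₁))². (Consequently the separating variable u₁ = a√Λ / (a² − (α₁β₂ − α₂β₁)), where Λ = (α₁−β₂)² + (α₂+β₁)², satisfies |u₁| ≤ 1.) -/
/-- Let `a > b > 0` and let `α, β ∈ ℝ³` satisfy `|α|² = a²`, `|β|² = b²`,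
`α·β = 0`. Then `a² − (α₁β₂ − α₂β₁) > 0` and
`a²·[(α₁−β₂)² + (α₂+β₁)²] ≤ (a² − (α₁β₂ − α₂β₁))²`. -/
theorem separating_variable_u1_bound
    (a b : ℝ) (hb : 0 < b) (hab : b < a)
    (α₁ α₂ α₃ β₁ β₂ β₃ : ℝ)
    (hα : α₁ ^ 2 + α₂ ^ 2 + α₃ ^ 2 = a ^ 2)
    (hβ : β₁ ^ 2 + β₂ ^ 2 + β₃ ^ 2 = b ^ 2)
    (hαβ : α₁ * β₁ + α₂ * β₂ + α₃ * β₃ = 0) :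
    0 < a ^ 2 - (α₁ * β₂ - α₂ * β₁) ∧
      a ^ 2 * ((α₁ - β₂) ^ 2 + (α₂ + β₁) ^ 2) ≤ (a ^ 2 - (α₁ * β₂ - α₂ * β₁)) ^ 2 := by
  have key : (a ^ 2 - (α₁ * β₂ - α₂ * β₁)) ^ 2 - a ^ 2 * ((α₁ - β₂) ^ 2 + (α₂ + β₁) ^ 2)
      = α₃ ^ 2 * (a ^ 2 - b ^ 2) := by
    linear_combination (β₁ ^ 2 + β₂ ^ 2 - a ^ 2) * hα - α₃ ^ 2 * hβ
      - (α₁ * β₁ + α₂ * β₂ - α₃ * β₃) * hαβ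
  have hba : 0 ≤ α₃ ^ 2 * (a ^ 2 - b ^ 2) := by
    apply mul_nonneg (sq_nonneg _)
    nlinarith
  constructor
  · nlinarith [sq_nonneg (α₁*β₁+α₂*β₂), sq_nonneg α₃, sq_nonneg β₃,
      sq_nonneg (a*b - (α₁*β₂-α₂*β₁)), sq_nonneg (a*b + (α₁*β₂-α₂*β₁)), sq_nonneg (a-b),
      mul_pos hb (hb.trans hab), sq_nonneg (α₁*β₁+α₂*β₂+α₃*β₃)]
  · linarith [key, hba]
end

section
/- Let a > b > 0 and let α, β ∈ ℝ³ satisfy |α|² = a², |β|² = b², α·β = 0. Then (b² − (α₁β₂ − α₂β₁))² ≤ b²·[(α₁−β₂)² + (α₂+β₁)²]. (Consequently, whenever Λ = (α₁−β₂)² + (α₂+β₁)² > 0, the separating variable u₂ = (b² − (α₁β₂−α₂β₁)) / (b√Λ) satisfies |u₂| ≤ 1.) -/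
/-- Let `a > b > 0` and let `α, β ∈ ℝ³` satisfy `|α|² = a²`, `|β|² = b²`,
`α·β = 0`. Then `(b² − (α₁β₂ − α₂β₁))² ≤ b²·[(α₁−β₂)² + (α₂+β₁)²]`. -/
theorem separating_variable_u2_bound
    (a b : ℝ) (hb : 0 < b) (hab : b < a)
    (α₁ α₂ α₃ β₁ β₂ β₃ : ℝ)
    (hα : α₁ ^ 2 + α₂ ^ 2 + α₃ ^ 2 = a ^ 2)
    (hβ : β₁ ^ 2 + β₂ ^ 2 + β₃ ^ 2 = b ^ 2)
    (hαβ : α₁ * β₁ + α₂ * β₂ + α₃ * β₃ = 0) :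
    (b ^ 2 - (α₁ * β₂ - α₂ * β₁)) ^ 2 ≤ b ^ 2 * ((α₁ - β₂) ^ 2 + (α₂ + β₁) ^ 2) := by
  have key : b ^ 2 * ((α₁ - β₂) ^ 2 + (α₂ + β₁) ^ 2)
      - (b ^ 2 - (α₁ * β₂ - α₂ * β₁)) ^ 2 = β₃ ^ 2 * (a ^ 2 - b ^ 2) := by
    linear_combination β₃ ^ 2 * hα + (b ^ 2 - α₁ ^ 2 - α₂ ^ 2 ) * hβ
      + (α₁ * β₁ + α₂ * β₂ - α₃ * β₃) * hαβ
  nlinarith [mul_nonneg (sq_nonneg β₃) (by nlinarith : (0:ℝ) ≤ a ^ 2 - b ^ 2), key]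
end

section
/- Along every solution of the Kowalevski double-field Euler equations, the function K = (ω₁² − ω₂² + α₁ − β₂)² + (2ω₁ω₂ + α₂ + β₁)² is constant in time; that is, K is a first integral of the system. -/
/-- The explicit form of the Euler equations of the Kowalevski top in a double force
field: `2ω₁' = ω₂ω₃ + β₃`, `2ω₂' = −ω₁ω₃ − α₃`, `ω₃' = α₂ − β₁`, `α' = α × ω`,
`β' = β × ω`. -/
def KowalevskiEqns (ω₁ ω₂ ω₃ α₁ α₂ α₃ β₁ β₂ β₃ : ℝ → ℝ) : Prop :=
  (∀ t, 2 * deriv ω₁ t = ω₂ t * ω₃ t + β₃ t) ∧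
  (∀ t, 2 * deriv ω₂ t = -(ω₁ t * ω₃ t) - α₃ t) ∧
  (∀ t, deriv ω₃ t = α₂ t - β₁ t) ∧
  (∀ t, deriv α₁ t = α₂ t * ω₃ t - α₃ t * ω₂ t) ∧
  (∀ t, deriv α₂ t = α₃ t * ω₁ t - α₁ t * ω₃ t) ∧
  (∀ t, deriv α₃ t = α₁ t * ω₂ t - α₂ t * ω₁ t) ∧
  (∀ t, deriv β₁ t = β₂ t * ω₃ t - β₃ t * ω₂ t) ∧
  (∀ t, deriv β₂ t = β₃ t * ω₁ t - β₁ t * ω₃ t) ∧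
  (∀ t, deriv β₃ t = β₁ t * ω₂ t - β₂ t * ω₁ t)

/-- The Kowalevski first integral `K = (ω₁² − ω₂² + α₁ − β₂)² + (2ω₁ω₂ + α₂ + β₁)²`. -/
def kowalevskiK (ω₁ ω₂ ω₃ α₁ α₂ α₃ β₁ β₂ β₃ : ℝ → ℝ) (t : ℝ) : ℝ :=
  ((ω₁ t) ^ 2 - (ω₂ t) ^ 2 + α₁ t - β₂ t) ^ 2 + (2 * ω₁ t * ω₂ t + α₂ t + β₁ t) ^ 2

/-- Along every solution of the Kowalevski double-field Euler equations,
the function `K = (ω₁² − ω₂² + α₁ − β₂)² + (2ω₁ω₂ + α₂ + β₁)²` is constant in time;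
that is, `K` is a first integral of the system. -/
theorem kowalevskiK_is_first_integral
    (ω₁ ω₂ ω₃ α₁ α₂ α₃ β₁ β₂ β₃ : ℝ → ℝ)
    (hω₁ : Differentiable ℝ ω₁) (hω₂ : Differentiable ℝ ω₂) (hω₃ : Differentiable ℝ ω₃)
    (hα₁ : Differentiable ℝ α₁) (hα₂ : Differentiable ℝ α₂) (hα₃ : Differentiable ℝ α₃)
    (hβ₁ : Differentiable ℝ β₁) (hβ₂ : Differentiable ℝ β₂) (hβ₃ : Differentiable ℝ β₃)
    (heq : KowalevskiEqns ω₁ ω₂ ω₃ α₁ α₂ α₃ β₁ β₂ β₃) :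
    ∀ t s : ℝ, kowalevskiK ω₁ ω₂ ω₃ α₁ α₂ α₃ β₁ β₂ β₃ t
      = kowalevskiK ω₁ ω₂ ω₃ α₁ α₂ α₃ β₁ β₂ β₃ s := by
  obtain ⟨e1, e2, e3, e4, e5, e6, e7, e8, e9⟩ := heq
  have hK : ∀ t, HasDerivAt (kowalevskiK ω₁ ω₂ ω₃ α₁ α₂ α₃ β₁ β₂ β₃) 0 t := by
    intro t
    have hu : HasDerivAt (fun t => (ω₁ t) ^ 2 - (ω₂ t) ^ 2 + α₁ t - β₂ t)
        ((2 * ω₁ t ^ 1 * deriv ω₁ t - 2 * ω₂ t ^ 1 * deriv ω₂ t + deriv α₁ t) - deriv β₂ t) t :=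
      ((((hω₁ t).hasDerivAt.pow 2).sub ((hω₂ t).hasDerivAt.pow 2)).add
        (hα₁ t).hasDerivAt).sub (hβ₂ t).hasDerivAt
    have hv : HasDerivAt (fun t => 2 * ω₁ t * ω₂ t + α₂ t + β₁ t)
        (((2 * deriv ω₁ t) * ω₂ t + (2 * ω₁ t) * deriv ω₂ t + deriv α₂ t) + deriv β₁ t) t :=
      ((((hω₁ t).hasDerivAt.const_mul 2).mul (hω₂ t).hasDerivAt).add
        (hα₂ t).hasDerivAt).add (hβ₁ t).hasDerivAt
    have h := ((hu.pow 2).add (hv.pow 2))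
    have hz : (2 * ((ω₁ t) ^ 2 - (ω₂ t) ^ 2 + α₁ t - β₂ t) ^ 1 *
        ((2 * ω₁ t ^ 1 * deriv ω₁ t - 2 * ω₂ t ^ 1 * deriv ω₂ t + deriv α₁ t) - deriv β₂ t)
        + 2 * (2 * ω₁ t * ω₂ t + α₂ t + β₁ t) ^ 1 *
        (((2 * deriv ω₁ t) * ω₂ t + (2 * ω₁ t) * deriv ω₂ t + deriv α₂ t) + deriv β₁ t)) = 0 := by
      linear_combination
        (2 * ω₁ t * ((ω₁ t) ^ 2 - (ω₂ t) ^ 2 + α₁ t - β₂ t)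
          + 2 * ω₂ t * (2 * ω₁ t * ω₂ t + α₂ t + β₁ t)) * e1 t
        + (-2 * ω₂ t * ((ω₁ t) ^ 2 - (ω₂ t) ^ 2 + α₁ t - β₂ t)
          + 2 * ω₁ t * (2 * ω₁ t * ω₂ t + α₂ t + β₁ t)) * e2 t
        + (2 * ((ω₁ t) ^ 2 - (ω₂ t) ^ 2 + α₁ t - β₂ t)) * e4 t
        + (2 * (2 * ω₁ t * ω₂ t + α₂ t + β₁ t)) * e5 t
        + (2 * (2 * ω₁ t * ω₂ t + α₂ t + β₁ t)) * e7 t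
        + (-2 * ((ω₁ t) ^ 2 - (ω₂ t) ^ 2 + α₁ t - β₂ t)) * e8 t
    refine h.congr_deriv ?_
    push_cast
    linarith [hz]
  intro t s
  exact is_const_of_deriv_eq_zero (fun x => (hK x).differentiableAt)
    (fun x => (hK x).deriv) t s
end

section
/- (Pendulum family R_a^±.) Let a, b ∈ ℝ, ε ∈ {+1,−1}, and let φ : ℝ → ℝ be twice differentiable with 2φ'' = b·cos φ. Define ω = (φ', 0, 0), α = (−εa, 0, 0), β = (0, b·sin φ, b·cos φ). Then (ω, α, β) is a solution of the Kowalevski double-field Euler equations, and along it H = (φ')² + εa − b·sin φ and K = ((φ')² − εa − b·sin φ)²; in particular H and K are constant in time. -/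
/-- The energy `H = ω₁² + ω₂² + (1/2)ω₃² − α₁ − β₂`. -/
noncomputable def kowalevskiH (ω₁ ω₂ ω₃ α₁ α₂ α₃ β₁ β₂ β₃ : ℝ → ℝ) (t : ℝ) : ℝ :=
  (ω₁ t) ^ 2 + (ω₂ t) ^ 2 + (1 / 2) * (ω₃ t) ^ 2 - α₁ t - β₂ t

/-- Pendulum family `R_a^±`: Let `a, b ∈ ℝ`, `ε ∈ {+1,−1}`, and let
`φ : ℝ → ℝ` be twice differentiable with `2φ'' = b·cos φ`. Define `ω = (φ', 0, 0)`,
`α = (−εa, 0, 0)`, `β = (0, b·sin φ, b·cos φ)`. Then `(ω, α, β)` is a solution of the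
Kowalevski double-field Euler equations, and along it `H = (φ')² + εa − b·sin φ` and
`K = ((φ')² − εa − b·sin φ)²`; in particular `H` and `K` are constant in time. -/
theorem pendulum_family_Ra
    (a b ε : ℝ) (hε : ε = 1 ∨ ε = -1)
    (φ : ℝ → ℝ) (hφ : Differentiable ℝ φ) (hφ' : Differentiable ℝ (deriv φ))
    (hpend : ∀ t, 2 * deriv (deriv φ) t = b * Real.cos (φ t)) :
    KowalevskiEqns (deriv φ) (fun _ => 0) (fun _ => 0)
        (fun _ => -(ε * a)) (fun _ => 0) (fun _ => 0)
        (fun _ => 0) (fun t => b * Real.sin (φ t)) (fun t => b * Real.cos (φ t)) ∧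
    (∀ t, kowalevskiH (deriv φ) (fun _ => 0) (fun _ => 0)
        (fun _ => -(ε * a)) (fun _ => 0) (fun _ => 0)
        (fun _ => 0) (fun t => b * Real.sin (φ t)) (fun t => b * Real.cos (φ t)) t
      = (deriv φ t) ^ 2 + ε * a - b * Real.sin (φ t)) ∧
    (∀ t, kowalevskiK (deriv φ) (fun _ => 0) (fun _ => 0)
        (fun _ => -(ε * a)) (fun _ => 0) (fun _ => 0)
        (fun _ => 0) (fun t => b * Real.sin (φ t)) (fun t => b * Real.cos (φ t)) t
      = ((deriv φ t) ^ 2 - ε * a - b * Real.sin (φ t)) ^ 2) ∧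
    (∀ t s : ℝ, (deriv φ t) ^ 2 + ε * a - b * Real.sin (φ t)
      = (deriv φ s) ^ 2 + ε * a - b * Real.sin (φ s)) ∧
    (∀ t s : ℝ, ((deriv φ t) ^ 2 - ε * a - b * Real.sin (φ t)) ^ 2
      = ((deriv φ s) ^ 2 - ε * a - b * Real.sin (φ s)) ^ 2) := by
  have hsin : ∀ t, deriv (fun t => b * Real.sin (φ t)) t = b * Real.cos (φ t) * deriv φ t := by
    intro t
    have : HasDerivAt (fun t => b * Real.sin (φ t)) (b * (Real.cos (φ t) * deriv φ t)) t := by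
      exact ((Real.hasDerivAt_sin (φ t)).comp t (hφ t).hasDerivAt).const_mul b
    simpa [mul_assoc] using this.deriv
  have hcos : ∀ t, deriv (fun t => b * Real.cos (φ t)) t = -(b * Real.sin (φ t)) * deriv φ t := by
    intro t
    have : HasDerivAt (fun t => b * Real.cos (φ t)) (b * (-Real.sin (φ t) * deriv φ t)) t := by
      exact ((Real.hasDerivAt_cos (φ t)).comp t (hφ t).hasDerivAt).const_mul b
    simpa [mul_assoc, mul_left_comm, mul_comm] using this.deriv
  have hg : Differentiable ℝ (fun t => (deriv φ t) ^ 2 - b * Real.sin (φ t)) := by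
    apply Differentiable.sub
    · exact hφ'.pow 2
    · exact (Real.differentiable_sin.comp hφ).const_mul b
  have hg0 : ∀ t, deriv (fun t => (deriv φ t) ^ 2 - b * Real.sin (φ t)) t = 0 := by
    intro t
    have hA := (hφ' t).hasDerivAt.pow 2
    have hB : HasDerivAt (fun t => b * Real.sin (φ t)) (b * (Real.cos (φ t) * deriv φ t)) t :=
      ((Real.hasDerivAt_sin (φ t)).comp t (hφ t).hasDerivAt).const_mul b
    rw [HasDerivAt.deriv (f := fun t => (deriv φ t) ^ 2 - b * Real.sin (φ t)) (hA.sub hB)]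
    have := hpend t
    push_cast
    norm_num
    linear_combination (deriv φ t) * this
  have hconst : ∀ t s : ℝ, (deriv φ t) ^ 2 - b * Real.sin (φ t)
      = (deriv φ s) ^ 2 - b * Real.sin (φ s) :=
    fun t s => is_const_of_deriv_eq_zero hg hg0 t s
  refine ⟨⟨?_, ?_, ?_, ?_, ?_, ?_, ?_, ?_, ?_⟩, ?_, ?_, ?_, ?_⟩
  · intro t; simpa using hpend t
  · intro t; simp
  · intro t; simp
  · intro t; simp
  · intro t; simp
  · intro t; simp
  · intro t; simp
  · intro t; rw [hsin t]; ring
  · intro t; rw [hcos t]; ring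
  · intro t; simp only [kowalevskiH]; ring
  · intro t; simp only [kowalevskiK]; ring
  · intro t s; have := hconst t s; linarith
  · intro t s; have := hconst t s
    have h1 : (deriv φ t) ^ 2 - ε * a - b * Real.sin (φ t)
        = (deriv φ s) ^ 2 - ε * a - b * Real.sin (φ s) := by linarith
    rw [h1]
end

section
/- (Pendulum family R_b^±.) Let a, b ∈ ℝ, ε ∈ {+1,−1}, and let φ : ℝ → ℝ be twice differentiable with 2φ'' = −a·sin φ. Define ω = (0, φ', 0), α = (a·cos φ, 0, a·sin φ), β = (0, −εb, 0). Then (ω, α, β) is a solution of the Kowalevski double-field Euler equations, and along it H = (φ')² + εb − a·cos φ and K = ((φ')² − εb − a·cos φ)²; in particular H and K are constant in time. -/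
/-- Pendulum family `R_b^±`: Let `a, b ∈ ℝ`, `ε ∈ {+1,−1}`, and let
`φ : ℝ → ℝ` be twice differentiable with `2φ'' = −a·sin φ`. Define `ω = (0, φ', 0)`,
`α = (a·cos φ, 0, a·sin φ)`, `β = (0, −εb, 0)`. Then `(ω, α, β)` is a solution of the
Kowalevski double-field Euler equations, and along it `H = (φ')² + εb − a·cos φ` and
`K = ((φ')² − εb − a·cos φ)²`; in particular `H` and `K` are constant in time. -/
theorem pendulum_family_Rb
    (a b ε : ℝ) (hε : ε = 1 ∨ ε = -1)
    (φ : ℝ → ℝ) (hφ : Differentiable ℝ φ) (hφ' : Differentiable ℝ (deriv φ))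
    (hpend : ∀ t, 2 * deriv (deriv φ) t = -(a * Real.sin (φ t))) :
    KowalevskiEqns (fun _ => 0) (deriv φ) (fun _ => 0)
        (fun t => a * Real.cos (φ t)) (fun _ => 0) (fun t => a * Real.sin (φ t))
        (fun _ => 0) (fun _ => -(ε * b)) (fun _ => 0) ∧
    (∀ t, kowalevskiH (fun _ => 0) (deriv φ) (fun _ => 0)
        (fun t => a * Real.cos (φ t)) (fun _ => 0) (fun t => a * Real.sin (φ t))
        (fun _ => 0) (fun _ => -(ε * b)) (fun _ => 0) t
      = (deriv φ t) ^ 2 + ε * b - a * Real.cos (φ t)) ∧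
    (∀ t, kowalevskiK (fun _ => 0) (deriv φ) (fun _ => 0)
        (fun t => a * Real.cos (φ t)) (fun _ => 0) (fun t => a * Real.sin (φ t))
        (fun _ => 0) (fun _ => -(ε * b)) (fun _ => 0) t
      = ((deriv φ t) ^ 2 - ε * b - a * Real.cos (φ t)) ^ 2) ∧
    (∀ t s : ℝ, (deriv φ t) ^ 2 + ε * b - a * Real.cos (φ t)
      = (deriv φ s) ^ 2 + ε * b - a * Real.cos (φ s)) ∧
    (∀ t s : ℝ, ((deriv φ t) ^ 2 - ε * b - a * Real.cos (φ t)) ^ 2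
      = ((deriv φ s) ^ 2 - ε * b - a * Real.cos (φ s)) ^ 2) := by
  have hcos : ∀ t, deriv (fun t => a * Real.cos (φ t)) t
      = -(a * Real.sin (φ t)) * deriv φ t := by
    intro t
    have : HasDerivAt (fun t => a * Real.cos (φ t))
        (a * (-Real.sin (φ t) * deriv φ t)) t := by
      exact (((Real.hasDerivAt_cos (φ t)).comp t (hφ t).hasDerivAt)).const_mul a
    rw [this.deriv]; ring
  have hsin : ∀ t, deriv (fun t => a * Real.sin (φ t)) t
      = a * Real.cos (φ t) * deriv φ t := by
    intro t
    have : HasDerivAt (fun t => a * Real.sin (φ t))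
        (a * (Real.cos (φ t) * deriv φ t)) t := by
      exact (((Real.hasDerivAt_sin (φ t)).comp t (hφ t).hasDerivAt)).const_mul a
    rw [this.deriv]; ring
  have hconst : ∀ t s : ℝ, (deriv φ t) ^ 2 - a * Real.cos (φ t)
      = (deriv φ s) ^ 2 - a * Real.cos (φ s) := by
    intro t s
    have key : ∀ x, deriv (fun t => (deriv φ t) ^ 2 - a * Real.cos (φ t)) x = 0 := by
      intro x
      have h1 : HasDerivAt (fun t => (deriv φ t) ^ 2)
          (2 * deriv φ x * deriv (deriv φ) x) x := by
        have := ((hφ' x).hasDerivAt.fun_pow 2)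
        simpa [mul_comm, mul_assoc, mul_left_comm] using this
      have h2 : HasDerivAt (fun t => a * Real.cos (φ t))
          (a * (-Real.sin (φ x) * deriv φ x)) x :=
        (((Real.hasDerivAt_cos (φ x)).comp x (hφ x).hasDerivAt)).const_mul a
      have h3 := (h1.fun_sub h2)
      rw [h3.deriv]
      have h4 : deriv (deriv φ) x = -(a * Real.sin (φ x)) / 2 := by
        have := hpend x; linarith
      rw [h4]; ring
    have hdiff : Differentiable ℝ (fun t => (deriv φ t) ^ 2 - a * Real.cos (φ t)) := by
      apply Differentiable.sub
      · exact hφ'.pow 2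
      · exact (Real.differentiable_cos.comp hφ).const_mul a
    have := is_const_of_deriv_eq_zero hdiff key t s
    simpa using this
  refine ⟨⟨?_, ?_, ?_, ?_, ?_, ?_, ?_, ?_, ?_⟩, ?_, ?_, ?_, ?_⟩
  · intro t; simp
  · intro t; simpa using hpend t
  · intro t; simp
  · intro t; rw [hcos t]; ring_nf
  · intro t; simp
  · intro t; rw [hsin t]; ring_nf
  · intro t; simp
  · intro t; simp
  · intro t; simp
  · intro t; simp [kowalevskiH]; ring
  · intro t; simp [kowalevskiK]; ring
  · intro t s; have := hconst t s; linarith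
  · intro t s; have := hconst t s
    have h : (deriv φ t) ^ 2 - ε * b - a * Real.cos (φ t)
        = (deriv φ s) ^ 2 - ε * b - a * Real.cos (φ s) := by linarith
    rw [h]
end

section
/- Let a > b > 0, p² = a²+b², and let ℓ, m, h be real numbers with ℓ² = 2p²m² + 2mh + 1; put h_* = −(h + p²m)/2, f₁(u) = h_*u² + aℓu − a²m, f₂(u) = b²mu² − bℓu − h_*. Then (aℓ)² + 4h_*·a²m = a² and (bℓ)² + 4b²m·h_* = b²; consequently there is no u ∈ ℝ with f₁(u) = 0 = f₁'(u), and no u ∈ ℝ with f₂(u) = 0 = f₂'(u) (the polynomials f₁ and f₂ never acquire a multiple root on the constraint set). -/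
lemma quad_deriv (A B C u : ℝ) :
    deriv (fun v : ℝ => A * v ^ 2 + B * v - C) u = 2 * A * u + B := by
  have h1 : HasDerivAt (fun v : ℝ => A * v ^ 2 + B * v - C) (2 * A * u + B) u := by
    have := (((hasDerivAt_pow 2 u).const_mul A).add ((hasDerivAt_id u).const_mul B)).sub_const C
    refine this.congr_deriv ?_
    simp; ring
  exact h1.deriv

lemma quad_disc (A B C u : ℝ) (h0 : A * u ^ 2 + B * u + C = 0) (h1 : 2 * A * u + B = 0) :
    B ^ 2 - 4 * A * C = 0 := by linear_combination (2 * A * u + B) * h1 - 4 * A * h0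

/-- Let `a > b > 0`, `p² = a²+b²`, and let `ℓ, m, h` be real numbers with
`ℓ² = 2p²m² + 2mh + 1`; put `h_* = −(h + p²m)/2`, `f₁(u) = h_*u² + aℓu − a²m`,
`f₂(u) = b²mu² − bℓu − h_*`. Then `(aℓ)² + 4h_*·a²m = a²` and `(bℓ)² + 4b²m·h_* = b²`;
consequently there is no `u ∈ ℝ` with `f₁(u) = 0 = f₁'(u)`, and no `u ∈ ℝ` with
`f₂(u) = 0 = f₂'(u)` (the polynomials `f₁` and `f₂` never acquire a multiple root on
the constraint set). -/
theorem no_multiple_roots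
    (a b : ℝ) (hb : 0 < b) (hab : b < a)
    (ℓ m h : ℝ) (hcon : ℓ ^ 2 = 2 * (a ^ 2 + b ^ 2) * m ^ 2 + 2 * m * h + 1) :
    (a * ℓ) ^ 2 + 4 * (-(h + (a ^ 2 + b ^ 2) * m) / 2) * (a ^ 2 * m) = a ^ 2 ∧
    (b * ℓ) ^ 2 + 4 * (b ^ 2 * m) * (-(h + (a ^ 2 + b ^ 2) * m) / 2) = b ^ 2 ∧
    (¬ ∃ u : ℝ,
      (-(h + (a ^ 2 + b ^ 2) * m) / 2) * u ^ 2 + a * ℓ * u - a ^ 2 * m = 0 ∧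
      deriv (fun v : ℝ =>
        (-(h + (a ^ 2 + b ^ 2) * m) / 2) * v ^ 2 + a * ℓ * v - a ^ 2 * m) u = 0) ∧
    (¬ ∃ u : ℝ,
      b ^ 2 * m * u ^ 2 - b * ℓ * u - (-(h + (a ^ 2 + b ^ 2) * m) / 2) = 0 ∧
      deriv (fun v : ℝ =>
        b ^ 2 * m * v ^ 2 - b * ℓ * v - (-(h + (a ^ 2 + b ^ 2) * m) / 2)) u = 0) := by
  set hs := -(h + (a ^ 2 + b ^ 2) * m) / 2 with hhs
  have e1 : (a * ℓ) ^ 2 + 4 * hs * (a ^ 2 * m) = a ^ 2 := by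
    rw [hhs]; nlinarith [hcon]
  have e2 : (b * ℓ) ^ 2 + 4 * (b ^ 2 * m) * hs = b ^ 2 := by
    rw [hhs]; nlinarith [hcon]
  refine ⟨e1, e2, ?_, ?_⟩
  · rintro ⟨u, h0, h1⟩
    rw [quad_deriv] at h1
    have := quad_disc hs (a * ℓ) (-(a ^ 2 * m)) u (by linarith) h1
    nlinarith [sq_nonneg a, mul_pos (hb.trans hab) (hb.trans hab)]
  · rintro ⟨u, h0, h1⟩
    rw [show (fun v : ℝ => b ^ 2 * m * v ^ 2 - b * ℓ * v - hs)
        = (fun v : ℝ => b ^ 2 * m * v ^ 2 + (-(b * ℓ)) * v - hs) by funext v; ring,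
      quad_deriv] at h1
    have := quad_disc (b ^ 2 * m) (-(b * ℓ)) (-hs) u (by linarith) h1
    nlinarith [mul_pos hb hb]
end

section
/- Let a > b > 0 and let (ℓ, m, h, u₁, Q₁, P₁, u₂, Q₂, P₂) ∈ ℝ⁹ satisfy the five constraints ℓ² = 2p²m² + 2mh + 1, Q₁² + u₁² = 1, P₁² = f₁(u₁), Q₂² + u₂² = 1, P₂² = f₂(u₂). If ℓ = 0, then m < 0. (Thus the degeneration locus of the symplectic structure projects onto the branch of the conic 2p²m² + 2hm + 1 = 0 with m < 0.) -/
/-- Let `a > b > 0` and let `(ℓ, m, h, u₁, Q₁, P₁, u₂, Q₂, P₂) ∈ ℝ⁹`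
satisfy the five constraints `ℓ² = 2p²m² + 2mh + 1`, `Q₁² + u₁² = 1`, `P₁² = f₁(u₁)`,
`Q₂² + u₂² = 1`, `P₂² = f₂(u₂)` (with `p² = a²+b²`, `h_* = −(h + p²m)/2`,
`f₁(u) = h_*u² + aℓu − a²m`, `f₂(u) = b²mu² − bℓu − h_*`). If `ℓ = 0`, then `m < 0`. -/
theorem degeneration_locus_negative_m
    (a b : ℝ) (hb : 0 < b) (hab : b < a)
    (ℓ m h u₁ Q₁ P₁ u₂ Q₂ P₂ : ℝ)
    (hcon : ℓ ^ 2 = 2 * (a ^ 2 + b ^ 2) * m ^ 2 + 2 * m * h + 1)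
    (hQ1 : Q₁ ^ 2 + u₁ ^ 2 = 1)
    (hP1 : P₁ ^ 2 = (-(h + (a ^ 2 + b ^ 2) * m) / 2) * u₁ ^ 2 + a * ℓ * u₁ - a ^ 2 * m)
    (hQ2 : Q₂ ^ 2 + u₂ ^ 2 = 1)
    (hP2 : P₂ ^ 2 = b ^ 2 * m * u₂ ^ 2 - b * ℓ * u₂ - (-(h + (a ^ 2 + b ^ 2) * m) / 2))
    (hl : ℓ = 0) :
    m < 0 := by
  subst hl
  by_contra hm
  push_neg at hm
  have hm0 : m ≠ 0 := by
    rintro rfl; simp at hcon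
  have hmpos : 0 < m := lt_of_le_of_ne hm (Ne.symm hm0)
  -- h_* = 1/(4m)
  have hstar : -(h + (a ^ 2 + b ^ 2) * m) / 2 = 1 / (4 * m) := by
    field_simp
    nlinarith [hcon]
  rw [hstar] at hP1 hP2
  have hu1 : u₁ ^ 2 ≤ 1 := by nlinarith [sq_nonneg Q₁]
  have hu2 : u₂ ^ 2 ≤ 1 := by nlinarith [sq_nonneg Q₂]
  have h1 : 4 * a ^ 2 * m ^ 2 ≤ 1 := by
    have e : a ^ 2 * m ≤ 1 / (4 * m) := by
      have h0 := sq_nonneg P₁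
      have := mul_le_of_le_one_right (le_of_lt (by positivity : (0:ℝ) < 1/(4*m))) hu1
      nlinarith
    rw [le_div_iff₀ (by positivity : (0:ℝ) < 4 * m)] at e
    have : a ^ 2 * m * (4 * m) = 4 * a ^ 2 * m ^ 2 := by ring
    linarith
  have h2 : 1 ≤ 4 * b ^ 2 * m ^ 2 := by
    have e : 1 / (4 * m) ≤ b ^ 2 * m := by
      have h0 := sq_nonneg P₂
      have := mul_le_of_le_one_right (by positivity : (0:ℝ) ≤ b ^ 2 * m) hu2
      nlinarith
    rw [div_le_iff₀ (by positivity : (0:ℝ) < 4 * m)] at e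
    have : b ^ 2 * m * (4 * m) = 4 * b ^ 2 * m ^ 2 := by ring
    linarith
  nlinarith [sq_nonneg m, mul_pos hb (hb.trans hab)]
end
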